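/- arXiv:1106.5099 — 3 statements merged into one kernel-verified Lean document; each statement's English description precedes it below -/
import Mathlib

section
/- Let {G_m} be a tower of finitely generated abelian groups such that for every prime p the inverse limit of the tower {G_m ⊗_ℤ ℤ_p} (with the transition maps induced by those of {G_m}) is the trivial group. Then the inverse limit of the tower {G_m} is the trivial group. -/
open TensorProduct

/-! If `g ⊗ 1` vanishes in `G ⊗ ℤ_p`, reducing `ℤ_p` to `ℤ/p^k` puts `g` in `p^k G` for every `k`,
and Krull's intersection theorem for the finitely generated `ℤ`-module `G` gives `(1 - a p) g = 0`
for some `a`. So the order of `g` has no prime factor and `g = 0`. Apply this to each coordinate of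
the compatible family `(x_m ⊗ 1)_m`. -/

lemma Submodule.mem_smul_top_of_tmul_one_eq_zero {R A M : Type*} [CommRing R] [CommRing A]
    [Algebra R A] [AddCommGroup M] [Module R M] {I : Ideal R} (φ : A →ₐ[R] R ⧸ I) {x : M}
    (hx : x ⊗ₜ[R] (1 : A) = 0) : x ∈ I • (⊤ : Submodule R M) := by
  have hφ := congrArg (tensorQuotEquivQuotSMul M I ∘ LinearMap.lTensor M φ.toLinearMap) hx
  simp only [Function.comp_apply, LinearMap.lTensor_tmul, AlgHom.toLinearMap_apply, map_one,
    map_zero] at hφ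
  rwa [← map_one (Ideal.Quotient.mk I), tensorQuotEquivQuotSMul_tmul_mk, one_smul,
    Submodule.Quotient.mk_eq_zero] at hφ

lemma mem_span_pow_smul_top_of_tmul_padicInt_eq_zero {p : ℕ} [Fact p.Prime] {G : Type*}
    [AddCommGroup G] {g : G} (hg : g ⊗ₜ[ℤ] (1 : ℤ_[p]) = 0) (k : ℕ) :
    g ∈ Ideal.span {(p : ℤ)} ^ k • (⊤ : Submodule ℤ G) := by
  have hI : Ideal.span {(p : ℤ)} ^ k = Ideal.span {((p ^ k : ℕ) : ℤ)} := by
    rw [Ideal.span_singleton_pow, Nat.cast_pow]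
  rw [hI]
  exact Submodule.mem_smul_top_of_tmul_one_eq_zero
    ((Int.quotientSpanNatEquivZMod (p ^ k)).symm.toRingHom.comp (PadicInt.toZModPow k)).toIntAlgHom
    hg

lemma exists_mul_prime_zsmul_eq_self_of_tmul_padicInt_eq_zero {p : ℕ} [Fact p.Prime] {G : Type*}
    [AddCommGroup G] [Module.Finite ℤ G] {g : G} (hg : g ⊗ₜ[ℤ] (1 : ℤ_[p]) = 0) :
    ∃ a : ℤ, (a * p) • g = g := by
  have hmem : g ∈ (⨅ k : ℕ, Ideal.span {(p : ℤ)} ^ k • ⊤ : Submodule ℤ G) :=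
    Submodule.mem_iInf _ |>.mpr (mem_span_pow_smul_top_of_tmul_padicInt_eq_zero hg)
  obtain ⟨⟨r, hr⟩, hrg⟩ := (Ideal.mem_iInf_smul_pow_eq_bot_iff _ g).mp hmem
  obtain ⟨a, rfl⟩ := Ideal.mem_span_singleton'.mp hr
  exact ⟨a, hrg⟩

lemma eq_zero_of_forall_prime_exists_mul_zsmul_eq_self {G : Type*} [AddCommGroup G] {g : G}
    (hg : ∀ p : ℕ, p.Prime → ∃ a : ℤ, (a * p) • g = g) : g = 0 := by
  refine AddMonoid.addOrderOf_eq_one_iff.mp (Nat.eq_one_iff_not_exists_prime_dvd.mpr ?_)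
  intro p hp hpn
  obtain ⟨a, ha⟩ := hg p hp
  have hord : ((addOrderOf g : ℕ) : ℤ) ∣ 1 - a * p := by
    rw [addOrderOf_dvd_iff_zsmul_eq_zero, sub_smul, one_smul, ha, sub_self]
  have hp1 : (p : ℤ) ∣ 1 :=
    (dvd_sub_left (dvd_mul_left _ _)).mp ((Int.natCast_dvd_natCast.mpr hpn).trans hord)
  exact hp.not_dvd_one (Int.natCast_dvd_natCast.mp hp1)

lemma eq_zero_of_forall_tmul_padicInt_eq_zero {G : Type*} [AddCommGroup G] [AddGroup.FG G]
    {g : G} (hg : ∀ (p : ℕ) [Fact p.Prime], g ⊗ₜ[ℤ] (1 : ℤ_[p]) = 0) : g = 0 := by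
  have : Module.Finite ℤ G := Module.Finite.iff_addGroup_fg.mpr ‹_›
  exact eq_zero_of_forall_prime_exists_mul_zsmul_eq_self fun p hp ↦
    have : Fact p.Prime := ⟨hp⟩
    exists_mul_prime_zsmul_eq_self_of_tmul_padicInt_eq_zero (hg p)

/-- Let `{G m}` be a tower of finitely generated abelian groups such that for every
prime `p` the inverse limit of the tower `{G m ⊗[ℤ] ℤ_[p]}` (with the induced transition
maps) is trivial.  Then the inverse limit of the tower `{G m}` is trivial. -/
theorem invLimit_trivial_of_padic_tensor_limits_trivial
    {G : ℕ → Type*} [∀ m, AddCommGroup (G m)] [∀ m, AddGroup.FG (G m)]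
    (f : ∀ m, G (m + 1) →+ G m)
    (h : ∀ (p : ℕ) [Fact p.Prime],
      ∀ y : ∀ m, (G m) ⊗[ℤ] ℤ_[p],
        (∀ m, LinearMap.rTensor ℤ_[p] (f m).toIntLinearMap (y (m + 1)) = y m) → y = 0) :
    ∀ x : ∀ m, G m, (∀ m, f m (x (m + 1)) = x m) → x = 0 := by
  intro x hx
  funext m
  refine eq_zero_of_forall_tmul_padicInt_eq_zero fun p _ ↦ ?_
  have hy : (fun m ↦ x m ⊗ₜ[ℤ] (1 : ℤ_[p])) = 0 :=
    h p _ fun m ↦ by rw [LinearMap.rTensor_tmul, AddMonoidHom.coe_toIntLinearMap, hx m]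
  exact congrFun hy m
end

section
/- Let {G_n, f_n : G_{n+1} → G_n} be a tower of abelian groups satisfying the Mittag-Leffler condition. Then lim¹ G_n = 0; explicitly, the homomorphism ∏_n G_n → ∏_n G_n sending (x_n) to (x_n − f_n(x_{n+1})) is surjective. -/
/-- The composite transition map `G (i + k) →+ G i` of a tower of abelian groups
`{G n, f n : G (n+1) →+ G n}`. -/
def towerCompMap {G : ℕ → Type*} [∀ n, AddCommGroup (G n)]
    (f : ∀ n, G (n + 1) →+ G n) (i : ℕ) : ∀ k : ℕ, G (i + k) →+ G i
  | 0 => AddMonoidHom.id (G i)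
  | (k + 1) => (towerCompMap f i k).comp (f (i + k))

/-- A tower of abelian groups `{G n, f n : G (n+1) →+ G n}` satisfies the
**Mittag-Leffler condition** if for every `i` there is a `j ≥ i` such that for all
`k ≥ j` the image of `G k → G i` equals the image of `G j → G i`. -/
def TowerMittagLeffler {G : ℕ → Type*} [∀ n, AddCommGroup (G n)]
    (f : ∀ n, G (n + 1) →+ G n) : Prop :=
  ∀ i, ∃ j, ∀ k, (towerCompMap f i (j + k)).range = (towerCompMap f i j).range

/-!
Let `H n` be the stable image of the tower in `G n`, i.e. the intersection of the images
of all `G k → G n`. Modulo the `H n`, every sequence `y` is already a coboundary: the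
truncated sums `z n = ∑_{k < c n} (image of y (n + k) in G n)` work once the cut-offs
`c n` lie past the point where the images of `G k → G n` have stabilised, because then
`y n - (z n - f n (z (n + 1)))` only collects terms with `k ≥ c n`. Under Mittag-Leffler
the maps `f n : H (n + 1) → H n` are surjective, so the remaining error, a sequence in
`H`, is a coboundary of a sequence in `H` built by lifting one step at a time.
-/

section Tower

variable {G : ℕ → Type*} [∀ n, AddCommGroup (G n)] (f : ∀ n, G (n + 1) →+ G n)

/-- Stated on a section `y` because `n + (k + 1)` and `n + 1 + k` are not definitionally
equal. -/
theorem towerCompMap_succ_apply (y : ∀ n, G n) (n k : ℕ) :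
    towerCompMap f n (k + 1) (y (n + (k + 1))) =
      f n (towerCompMap f (n + 1) k (y (n + 1 + k))) := by
  induction k generalizing y with
  | zero => rfl
  | succ k ih => exact ih fun m => f m (y (m + 1))

theorem range_towerCompMap_succ_le_map (n k : ℕ) :
    (towerCompMap f n (k + 1)).range ≤ (towerCompMap f (n + 1) k).range.map (f n) := by
  classical
  rintro _ ⟨x, rfl⟩
  have hx := towerCompMap_succ_apply f (Pi.single (n + (k + 1)) x) n k
  rw [Pi.single_eq_same] at hx
  exact hx ▸ AddSubgroup.mem_map_of_mem _ ⟨_, rfl⟩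

theorem antitone_range_towerCompMap (n : ℕ) : Antitone fun k => (towerCompMap f n k).range := by
  refine antitone_nat_of_succ_le fun k => ?_
  rintro _ ⟨x, rfl⟩
  exact ⟨f (n + k) x, rfl⟩

def stableImage (n : ℕ) : AddSubgroup (G n) :=
  ⨅ k, (towerCompMap f n k).range

variable {f}

theorem TowerMittagLeffler.exists_range_eq_stableImage (hML : TowerMittagLeffler f) (n : ℕ) :
    ∃ j, ∀ k, j ≤ k → (towerCompMap f n k).range = stableImage f n := by
  obtain ⟨j, hj⟩ := hML n
  have hstable : ∀ k, j ≤ k → (towerCompMap f n k).range = (towerCompMap f n j).range := by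
    intro k hk
    obtain ⟨l, rfl⟩ := Nat.exists_eq_add_of_le hk
    exact hj l
  refine ⟨j, fun k hk => (hstable k hk).trans (le_antisymm ?_ (iInf_le _ j))⟩
  refine le_iInf fun l => ?_
  rw [← hstable (j + l) (Nat.le_add_right j l)]
  exact antitone_range_towerCompMap f n (Nat.le_add_left l j)

theorem TowerMittagLeffler.stableImage_le_map (hML : TowerMittagLeffler f) (n : ℕ) :
    stableImage f n ≤ (stableImage f (n + 1)).map (f n) := by
  obtain ⟨j, hj⟩ := hML.exists_range_eq_stableImage n
  obtain ⟨j', hj'⟩ := hML.exists_range_eq_stableImage (n + 1)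
  rw [← hj (j + j' + 1) (by omega), ← hj' (j + j') (by omega)]
  exact range_towerCompMap_succ_le_map f n (j + j')

variable (f)

theorem exists_sub_map_eq_of_le_map (H : ∀ n, AddSubgroup (G n))
    (hH : ∀ n, H n ≤ (H (n + 1)).map (f n)) (y : ∀ n, G n) (hy : ∀ n, y n ∈ H n) :
    ∃ x : ∀ n, G n, ∀ n, x n - f n (x (n + 1)) = y n := by
  choose lift lift_mem map_lift using fun n h (hh : h ∈ H n) => hH n hh
  let x : ∀ n, H n := fun n =>
    Nat.rec ⟨0, zero_mem _⟩ (fun n xn => ⟨lift n _ (sub_mem xn.2 (hy n)), lift_mem n _ _⟩) n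
  exact ⟨fun n => (x n).1, fun n => by simp only [x, map_lift, sub_sub_cancel]⟩

theorem exists_sub_sub_map_mem (H : ∀ n, AddSubgroup (G n)) (j : ℕ → ℕ)
    (hH : ∀ n k, j n ≤ k → (towerCompMap f n k).range ≤ H n) (y : ∀ n, G n) :
    ∃ z : ∀ n, G n, ∀ n, y n - (z n - f n (z (n + 1))) ∈ H n := by
  let c : ℕ → ℕ := fun n => ∑ m ∈ Finset.range (n + 1), j m
  have hc : ∀ n, j n ≤ c n ∧ c n ≤ c (n + 1) := fun n => by
    simp only [c, Finset.sum_range_succ _ (n + 1), Finset.sum_range_succ _ n]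
    omega
  let T : ∀ n, ℕ → G n := fun n k => towerCompMap f n k (y (n + k))
  let z : ∀ n, G n := fun n => ∑ k ∈ Finset.range (c n), T n k
  refine ⟨z, fun n => ?_⟩
  have hshift : f n (z (n + 1)) = ∑ k ∈ Finset.range (c (n + 1) + 1), T n k - y n := by
    rw [map_sum, Finset.sum_range_succ', eq_sub_iff_add_eq]
    exact congrArg (· + y n) <|
      Finset.sum_congr rfl fun k _ => (towerCompMap_succ_apply f y n k).symm
  have hresidual :
      y n - (z n - f n (z (n + 1))) = ∑ k ∈ Finset.Ico (c n) (c (n + 1) + 1), T n k := by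
    rw [hshift, Finset.sum_Ico_eq_sub _ ((hc n).2.trans (Nat.le_succ _))]
    abel
  rw [hresidual]
  exact AddSubgroup.sum_mem _ fun k hk =>
    hH n k ((hc n).1.trans (Finset.mem_Ico.mp hk).1) ⟨_, rfl⟩

end Tower

/-- If a tower of abelian groups `{G n}` satisfies the Mittag-Leffler condition, then
`lim¹ G n = 0`, i.e. the map `∏ G n → ∏ G n`, `(x n) ↦ (x n - f n (x (n+1)))`, is
surjective. -/
theorem lim1_eq_zero_of_mittagLeffler
    {G : ℕ → Type*} [∀ n, AddCommGroup (G n)] (f : ∀ n, G (n + 1) →+ G n)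
    (hML : TowerMittagLeffler f) :
    Function.Surjective (fun x : ∀ n, G n => fun n => x n - f n (x (n + 1))) := by
  intro y
  choose j hj using hML.exists_range_eq_stableImage
  obtain ⟨z, hz⟩ := exists_sub_sub_map_mem f (stableImage f) j (fun n k hk => (hj n k hk).le) y
  obtain ⟨w, hw⟩ := exists_sub_map_eq_of_le_map f (stableImage f) hML.stableImage_le_map _ hz
  refine ⟨z + w, funext fun n => ?_⟩
  show z n + w n - f n (z (n + 1) + w (n + 1)) = y n
  rw [map_add, add_sub_add_comm, hw n, add_sub_cancel]
end

section
/- Let {G_n, f_n : G_{n+1} → G_n} be a tower of abelian groups in which every group G_n is countable. If lim¹ G_n = 0, i.e. the homomorphism ∏_n G_n → ∏_n G_n sending (x_n) to (x_n − f_n(x_{n+1})) is surjective, then the tower {G_n} satisfies the Mittag-Leffler condition. -/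
open Finset

theorem Set.Infinite.not_injOn_powerset {α A : Type*} [Countable A] {J : Set α}
    (hJ : J.Infinite) (x : Set α → A) : ¬ Set.InjOn x (𝒫 J) := by
  intro hx
  obtain ⟨e, he⟩ := Countable.exists_injective_nat A
  set ν := Set.Infinite.natEmbedding J hJ
  have hνJ : ∀ S, (↑) '' (ν '' S) ∈ 𝒫 J := fun S => by simp
  refine Function.cantor_injective (fun S => e (x ((↑) '' (ν '' S)))) fun S T h => ?_
  exact (Set.image_injective.mpr ν.injective)
    (Set.image_injective.mpr Subtype.val_injective (hx (hνJ S) (hνJ T) (he h)))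

section
variable {A : Type*} [AddCommGroup A] {I : ℕ → AddSubgroup A}

theorem exists_forall_add_eq_of_finite_setOf_ne (h : {j | I (j + 1) ≠ I j}.Finite) :
    ∃ N, ∀ k, I (N + k) = I N := by
  obtain ⟨N, hN⟩ := h.bddAbove
  refine ⟨N + 1, fun k => ?_⟩
  induction k with
  | zero => rfl
  | succ k ih =>
    rw [← ih, ← add_assoc]
    by_contra hne
    have := hN hne
    omega

theorem injOn_of_sub_sum_indicator_mem {g : ℕ → A} {x : Set ℕ → A}
    (hx : ∀ S M, x S - ∑ j ∈ range M, S.indicator g j ∈ I M) :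
    Set.InjOn x (𝒫 {j | g j ∉ I (j + 1)}) := by
  intro S hS T hT hxST
  ext t
  induction t using Nat.strong_induction_on with
  | _ t ih =>
  have hsum : ∑ j ∈ range t, S.indicator g j = ∑ j ∈ range t, T.indicator g j :=
    sum_congr rfl fun j hj => by
      classical
      simp only [Set.indicator_apply, ih j (mem_range.mp hj)]
  have hdiff : T.indicator g t - S.indicator g t ∈ I (t + 1) := by
    have := sub_mem (hx S (t + 1)) (hx T (t + 1))
    rwa [hxST, sum_range_succ, sum_range_succ, hsum, sub_sub_sub_cancel_left,
      add_sub_add_left_eq_sub] at this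
  by_cases htS : t ∈ S <;> by_cases htT : t ∈ T
  · exact iff_of_true htS htT
  · simp only [Set.indicator_of_mem htS, Set.indicator_of_notMem htT, zero_sub,
      neg_mem_iff] at hdiff
    exact absurd hdiff (hS htS)
  · simp only [Set.indicator_of_mem htT, Set.indicator_of_notMem htS, sub_zero] at hdiff
    exact absurd hdiff (hT htT)
  · exact iff_of_false htS htT

theorem exists_forall_add_eq_of_countable [Countable A] (hI : Antitone I)
    (hsum : ∀ a : ℕ → A, (∀ j, a j ∈ I j) → ∃ x, ∀ M, x - ∑ j ∈ range M, a j ∈ I M) :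
    ∃ N, ∀ k, I (N + k) = I N := by
  have hg : ∀ j, ∃ g ∈ I j, I (j + 1) ≠ I j → g ∉ I (j + 1) := fun j => by
    by_cases h : I (j + 1) = I j
    · exact ⟨0, zero_mem _, fun h' => absurd h h'⟩
    · obtain ⟨g, hg, hg'⟩ := SetLike.exists_of_lt (lt_of_le_of_ne (hI j.le_succ) h)
      exact ⟨g, hg, fun _ => hg'⟩
  choose g hgI hg_notMem using hg
  have hind : ∀ (S : Set ℕ) j, S.indicator g j ∈ I j := fun S j => by
    classical
    rw [Set.indicator_apply]
    split_ifs
    exacts [hgI j, zero_mem _]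
  choose x hx using fun S => hsum (S.indicator g) (hind S)
  refine exists_forall_add_eq_of_finite_setOf_ne (Set.not_infinite.mp fun hJ => ?_)
  exact (hJ.mono fun j => hg_notMem j).not_injOn_powerset x (injOn_of_sub_sum_indicator_mem hx)
end

theorem exists_forall_apply_add_eq {G : ℕ → Type*} [∀ n, Zero (G n)] (i : ℕ)
    (u : ∀ k, G (i + k)) : ∃ y : ∀ n, G n, ∀ k, y (i + k) = u k := by
  refine ⟨fun n => if h : i ≤ n then cast (congrArg G (Nat.add_sub_cancel' h)) (u (n - i))
    else 0, fun k => ?_⟩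
  dsimp only
  rw [dif_pos (Nat.le_add_right i k), cast_eq_iff_heq]
  exact congr_arg_heq u (Nat.add_sub_cancel_left i k)

section
variable {G : ℕ → Type*} [∀ n, AddCommGroup (G n)] (f : ∀ n, G (n + 1) →+ G n)

theorem towerCompMap_range_antitone (i : ℕ) : Antitone fun k => (towerCompMap f i k).range :=
  antitone_nat_of_succ_le fun k => by
    rintro _ ⟨z, rfl⟩
    exact ⟨f (i + k) z, rfl⟩

theorem towerCompMap_sub_sum_eq (i : ℕ) {x y : ∀ n, G n}
    (hxy : ∀ n, x n - f n (x (n + 1)) = y n) (M : ℕ) :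
    x i - ∑ k ∈ range M, towerCompMap f i k (y (i + k)) = towerCompMap f i M (x (i + M)) := by
  induction M with
  | zero => simp only [range_zero, sum_empty, sub_zero]; rfl
  | succ M ih =>
    rw [sum_range_succ, ← sub_sub, ih, ← hxy (i + M), map_sub, sub_sub_cancel]
    rfl

theorem exists_sub_sum_mem_towerCompMap_range
    (hlim1 : Function.Surjective (fun x : ∀ n, G n => fun n => x n - f n (x (n + 1))))
    (i : ℕ) (a : ℕ → G i) (ha : ∀ k, a k ∈ (towerCompMap f i k).range) :
    ∃ x, ∀ M, x - ∑ k ∈ range M, a k ∈ (towerCompMap f i M).range := by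
  choose u hu using ha
  obtain ⟨y, hy⟩ := exists_forall_apply_add_eq i u
  obtain ⟨x, hx⟩ := hlim1 y
  refine ⟨x i, fun M => ⟨x (i + M), ?_⟩⟩
  rw [← towerCompMap_sub_sum_eq f i (congrFun hx) M]
  simp only [hy, hu]
end

/-- (McGibbon–Møller.)  If `{G n}` is a tower of countable abelian groups with
`lim¹ G n = 0` (i.e. the map `∏ G n → ∏ G n`, `(x n) ↦ (x n - f n (x (n+1)))`, is
surjective), then the tower satisfies the Mittag-Leffler condition. -/
theorem mittagLeffler_of_lim1_eq_zero_of_countable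
    {G : ℕ → Type*} [∀ n, AddCommGroup (G n)] [∀ n, Countable (G n)]
    (f : ∀ n, G (n + 1) →+ G n)
    (hlim1 : Function.Surjective (fun x : ∀ n, G n => fun n => x n - f n (x (n + 1)))) :
    TowerMittagLeffler f := fun i =>
  exists_forall_add_eq_of_countable (towerCompMap_range_antitone f i)
    (exists_sub_sum_mem_towerCompMap_range f hlim1 i)
end
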